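/- For every finite simple graph G with at least one edge, vs_χ(G) ≤ n(G)/χ(G), where n(G) is the number of vertices of G. -/

import Mathlib

open SimpleGraph

/-- The chromatic number of a graph, as a natural number (for finite graphs this
is the usual chromatic number). -/
noncomputable def chromNum {V : Type*} (G : SimpleGraph V) : ℕ :=
  sInf {n : ℕ | G.Colorable n}

/-- The maximum degree Δ(G) of a finite graph. -/
noncomputable def maxDeg {V : Type*} [Fintype V] (G : SimpleGraph V) : ℕ :=
  Finset.univ.sup fun v => Nat.card (G.neighborSet v)

/-- The chromatic vertex stability number: the minimum number of vertices whose
deletion results in a graph with chromatic number χ(G) − 1. -/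
noncomputable def vsChi {V : Type*} [Fintype V] (G : SimpleGraph V) : ℕ :=
  sInf {k : ℕ | ∃ S : Finset V, S.card = k ∧
    chromNum (G.induce ((S : Set V))ᶜ) = chromNum G - 1}

/-- The independent chromatic vertex stability number: the minimum size of an
independent set of vertices whose deletion results in a graph with chromatic
number χ(G) − 1. -/
noncomputable def ivsChi {V : Type*} [Fintype V] (G : SimpleGraph V) : ℕ :=
  sInf {k : ℕ | ∃ S : Finset V, S.card = k ∧
    (∀ u ∈ S, ∀ v ∈ S, ¬ G.Adj u v) ∧
    chromNum (G.induce ((S : Set V))ᶜ) = chromNum G - 1}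

/-- The chromatic edge stability number: the minimum number of edges whose
deletion results in a graph with chromatic number χ(G) − 1. -/
noncomputable def esChi {V : Type*} (G : SimpleGraph V) : ℕ :=
  sInf {k : ℕ | ∃ F : Finset (Sym2 V), ↑F ⊆ G.edgeSet ∧ F.card = k ∧
    chromNum (G.deleteEdges ↑F) = chromNum G - 1}

/-!
Fix a proper colouring of `G` with `χ(G)` colours. Deleting any colour class leaves a graph
coloured by the remaining `χ(G) - 1` colours, and it cannot be coloured with fewer, since the
deleted independent set could then be given one new colour. So `vs_χ(G)` is at most the size of
the smallest colour class, which by pigeonhole is at most `n(G) / χ(G)`.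
-/

namespace SimpleGraph

variable {V : Type*} {G : SimpleGraph V}

theorem chromNum_le_of_colorable {n : ℕ} (h : G.Colorable n) : chromNum G ≤ n :=
  Nat.sInf_le h

theorem colorable_chromNum [Finite V] (G : SimpleGraph V) : G.Colorable (chromNum G) := by
  have := Fintype.ofFinite V
  exact Nat.sInf_mem (s := {n | G.Colorable n}) ⟨_, G.colorable_of_fintype⟩

theorem chromNum_pos [Finite V] [Nonempty V] (G : SimpleGraph V) : 0 < chromNum G := by
  by_contra! h
  have h0 := G.colorable_chromNum
  rw [Nat.le_zero.mp h, colorable_zero_iff] at h0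
  exact not_isEmpty_of_nonempty V h0

theorem IsIndepSet.colorable_succ_of_colorable_induce_compl {s : Set V} (hs : G.IsIndepSet s)
    {n : ℕ} (h : (G.induce sᶜ).Colorable n) : G.Colorable (n + 1) := by
  classical
  obtain ⟨D⟩ := h
  refine ⟨Coloring.mk
    (fun v => if hv : v ∈ s then Fin.last n else (D ⟨v, hv⟩).castSucc) fun {a b} hab => ?_⟩
  by_cases ha : a ∈ s <;> by_cases hb : b ∈ s <;> simp only [ha, hb, dite_true, dite_false]
  · exact (hs ha hb (G.ne_of_adj hab) hab).elim
  · exact (Fin.castSucc_lt_last _).ne'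
  · exact (Fin.castSucc_lt_last _).ne
  · exact fun h => D.valid (show (G.induce sᶜ).Adj ⟨a, ha⟩ ⟨b, hb⟩ from hab)
      (Fin.castSucc_injective _ h)

theorem Coloring.colorable_induce_compl_colorClass {α : Type*} [Fintype α] [DecidableEq α]
    (C : G.Coloring α) (i : α) :
    (G.induce (C.colorClass i)ᶜ).Colorable (Fintype.card α - 1) := by
  have D : (G.induce (C.colorClass i)ᶜ).Coloring {j : α // j ≠ i} :=
    Coloring.mk (fun v => ⟨C v, v.2⟩) fun hab h => C.valid hab (congrArg Subtype.val h)
  simpa [Fintype.card_subtype_compl] using D.colorable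

theorem chromNum_induce_compl_colorClass [Finite V] (C : G.Coloring (Fin (chromNum G)))
    (i : Fin (chromNum G)) :
    chromNum (G.induce (C.colorClass i)ᶜ) = chromNum G - 1 := by
  apply le_antisymm
  · simpa using chromNum_le_of_colorable (C.colorable_induce_compl_colorClass i)
  · have := chromNum_le_of_colorable <|
      (C.isIndepSet_colorClass i).colorable_succ_of_colorable_induce_compl
        (colorable_chromNum _)
    omega

theorem vsChi_le_card_colorClass [Fintype V] (C : G.Coloring (Fin (chromNum G)))
    (i : Fin (chromNum G)) : vsChi G ≤ (Finset.univ.filter fun v => C v = i).card :=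
  Nat.sInf_le ⟨_, rfl, by
    rw [Finset.coe_filter_univ]; exact chromNum_induce_compl_colorClass C i⟩

theorem vsChi_le_card_div_chromNum [Fintype V] [Nonempty V] (G : SimpleGraph V) :
    (vsChi G : ℝ) ≤ Fintype.card V / chromNum G := by
  obtain ⟨C⟩ := G.colorable_chromNum
  have hpos := G.chromNum_pos
  have : Nonempty (Fin (chromNum G)) := ⟨⟨0, hpos⟩⟩
  obtain ⟨i, hi⟩ := Fintype.exists_card_fiber_le_of_card_le_nsmul (f := C)
    (b := (Fintype.card V / chromNum G : ℝ)) (by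
      rw [Fintype.card_fin, nsmul_eq_mul, mul_div_cancel₀ _ (by positivity)])
  exact le_trans (by exact_mod_cast vsChi_le_card_colorClass C i) hi

end SimpleGraph

/-- For every finite simple graph $G$ with at least one edge,
$vs_χ(G) ≤ n(G)/χ(G)$. -/
theorem stmt_8 {V : Type*} [Fintype V] (G : SimpleGraph V)
    (hedge : G.edgeSet.Nonempty) :
    (vsChi G : ℝ) ≤ (Fintype.card V : ℝ) / (chromNum G : ℝ) := by
  obtain ⟨e, he⟩ := hedge
  have : Nonempty V := ⟨e.out.1⟩
  exact G.vsChi_le_card_div_chromNum
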